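/- Let σ : SL(2,ℤ) → SL(2,ℤ) be the group automorphism sending [[a,b],[c,d]] to [[a,-b],[-c,d]] (conjugation by diag(-1,1)). Then the image of U₁ under σ equals the conjugate subgroup T·V₁·T⁻¹. -/

import Mathlib

open Matrix

/-- `SL(2,ℤ)`, the group of 2×2 integer matrices of determinant 1. -/
abbrev SL2Z := Matrix.SpecialLinearGroup (Fin 2) ℤ

/-- The matrix `T = [[1,1],[0,1]]` in `SL(2,ℤ)`. -/
def Tmat : SL2Z := ⟨!![1, 1; 0, 1], by norm_num [Matrix.det_fin_two_of]⟩

/-- The subgroup `U₁` of `SL(2,ℤ)`. -/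
def U1 : Subgroup SL2Z :=
  Subgroup.closure
    { (⟨!![1, 6; 0, 1], by norm_num [Matrix.det_fin_two_of]⟩ : SL2Z),
      ⟨!![1, -2; 1, -1], by norm_num [Matrix.det_fin_two_of]⟩,
      ⟨!![0, -1; 1, 1], by norm_num [Matrix.det_fin_two_of]⟩ }

/-- The subgroup `V₁` of `SL(2,ℤ)`. -/
def V1 : Subgroup SL2Z :=
  Subgroup.closure
    { (⟨!![1, 6; 0, 1], by norm_num [Matrix.det_fin_two_of]⟩ : SL2Z),
      ⟨!![4, -17; 1, -4], by norm_num [Matrix.det_fin_two_of]⟩,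
      ⟨!![0, -1; 1, 1], by norm_num [Matrix.det_fin_two_of]⟩ }


/-!
Conjugation by `T` fixes `T⁶` and sends `R` to `T R T⁻¹ = σ(R)⁻¹`, while `σ(T⁶) = T⁻⁶`.
The remaining generator of `T V₁ T⁻¹` is `T⁶ σ(X)⁻¹ T⁻⁶`, where `X = [[1,-2],[1,-1]]` is the middle
generator of `U₁`. So each generating triple is obtained from the other by
`(a, b, c) ↦ (a⁻¹, a⁻¹ b⁻¹ a, c⁻¹)`, which does not change the generated subgroup.
-/

theorem Subgroup.closure_triple_eq_inv_conj {G : Type*} [Group G] (a b c : G) :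
    Subgroup.closure {a, b, c} = Subgroup.closure {a⁻¹, a⁻¹ * b⁻¹ * a, c⁻¹} := by
  apply le_antisymm <;> rw [Subgroup.closure_le, Set.insert_subset_iff, Set.insert_subset_iff,
    Set.singleton_subset_iff]
  · set H := Subgroup.closure ({a⁻¹, a⁻¹ * b⁻¹ * a, c⁻¹} : Set G)
    have ha : a⁻¹ ∈ H := Subgroup.subset_closure (by simp)
    have hb : a⁻¹ * b⁻¹ * a ∈ H := Subgroup.subset_closure (by simp)
    have hc : c⁻¹ ∈ H := Subgroup.subset_closure (by simp)
    refine ⟨by simpa using inv_mem ha, ?_, by simpa using inv_mem hc⟩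
    simpa [mul_assoc] using mul_mem (inv_mem ha) (mul_mem (inv_mem hb) ha)
  · set H := Subgroup.closure ({a, b, c} : Set G)
    have ha : a ∈ H := Subgroup.subset_closure (by simp)
    have hb : b ∈ H := Subgroup.subset_closure (by simp)
    have hc : c ∈ H := Subgroup.subset_closure (by simp)
    exact ⟨inv_mem ha, mul_mem (mul_mem (inv_mem ha) (inv_mem hb)) ha, inv_mem hc⟩

namespace SigmaU1

def T6 : SL2Z := ⟨!![1, 6; 0, 1], by norm_num [Matrix.det_fin_two_of]⟩
def X : SL2Z := ⟨!![1, -2; 1, -1], by norm_num [Matrix.det_fin_two_of]⟩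
def Y : SL2Z := ⟨!![4, -17; 1, -4], by norm_num [Matrix.det_fin_two_of]⟩
def R : SL2Z := ⟨!![0, -1; 1, 1], by norm_num [Matrix.det_fin_two_of]⟩

lemma U1_eq_closure : U1 = Subgroup.closure {T6, X, R} := rfl
lemma V1_eq_closure : V1 = Subgroup.closure {T6, Y, R} := rfl

variable (σ : SL2Z ≃* SL2Z)
    (hσ : ∀ g : SL2Z,
      ((σ g : SL2Z) : Matrix (Fin 2) (Fin 2) ℤ) = !![g 0 0, -(g 0 1); -(g 1 0), g 1 1])
include hσ

lemma conj_T6 : MulAut.conj Tmat T6 = (σ T6)⁻¹ := by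
  apply Subtype.ext
  simp only [MulAut.conj_apply, Matrix.SpecialLinearGroup.coe_mul,
    Matrix.SpecialLinearGroup.coe_inv, hσ]
  simp [Tmat, T6, Matrix.adjugate_fin_two_of]

lemma conj_Y : MulAut.conj Tmat Y = (σ T6)⁻¹ * (σ X)⁻¹ * σ T6 := by
  apply Subtype.ext
  simp only [MulAut.conj_apply, Matrix.SpecialLinearGroup.coe_mul,
    Matrix.SpecialLinearGroup.coe_inv, hσ]
  simp [Tmat, T6, X, Y, Matrix.adjugate_fin_two_of]

lemma conj_R : MulAut.conj Tmat R = (σ R)⁻¹ := by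
  apply Subtype.ext
  simp only [MulAut.conj_apply, Matrix.SpecialLinearGroup.coe_mul,
    Matrix.SpecialLinearGroup.coe_inv, hσ]
  simp [Tmat, R, Matrix.adjugate_fin_two_of]

end SigmaU1

open SigmaU1 in
/-- If `σ` is the group automorphism of `SL(2,ℤ)` sending `[[a,b],[c,d]]` to
`[[a,-b],[-c,d]]` (conjugation by `diag(-1,1)`), then `σ(U₁) = T·V₁·T⁻¹`. -/
theorem sigma_U1_eq_conj_V1 (σ : SL2Z ≃* SL2Z)
    (hσ : ∀ g : SL2Z,
      ((σ g : SL2Z) : Matrix (Fin 2) (Fin 2) ℤ) = !![g 0 0, -(g 0 1); -(g 1 0), g 1 1]) :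
    Subgroup.map σ.toMonoidHom U1 = Subgroup.map (MulAut.conj Tmat).toMonoidHom V1 := by
  rw [U1_eq_closure, V1_eq_closure, MonoidHom.map_closure, MonoidHom.map_closure]
  simp only [Set.image_insert_eq, Set.image_singleton, MulEquiv.coe_toMonoidHom]
  rw [conj_T6 σ hσ, conj_Y σ hσ, conj_R σ hσ, Subgroup.closure_triple_eq_inv_conj]
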